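/- Let q ≡ 3 (mod 4) be a prime power with q ≥ 7, and let X_q be the orbital digraph of H = SL(2,q) on Δ with arc set {([1,0],[0,1])^h : h ∈ H}. Then in X_q, for every vertex v there is exactly one vertex not adjacent to v (in either direction), namely v^z, where z = -I is the central involution of SL(2,q). -/

import Mathlib

/-!
A vertex of `X_q` is the square class `⟨u⟩` of a nonzero vector, and `(⟨u⟩, ⟨v⟩)` is an arc
exactly when `det (u, v)` is a nonzero square: `SL(2,q)` maps `(e₁, e₂)` to any pair of rows of
determinant `1`, and rescaling the rows by squares rescales the determinant by a square.
Since `q ≡ 3 (mod 4)`, `-1` is a non-square, so for `d ≠ 0` exactly one of `d`, `-d` is a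
square. Hence `⟨u⟩` and `⟨v⟩` are adjacent iff `u, v` are linearly independent, and the
vertices non-adjacent to `⟨u⟩` are the classes `⟨t u⟩`, `t ≠ 0`, which are `⟨u⟩` and `⟨-u⟩`.
-/

open scoped Matrix MatrixGroups

section SquareClass

variable (K : Type*) {V W : Type*} [Field K] [AddCommGroup V] [Module K V]
  [AddCommGroup W] [Module K W]

def squareClass (v : V) : Set V := {w | ∃ x : K, x ≠ 0 ∧ x ^ 2 • v = w}

variable {K}

lemma squareClass_smul_of_isSquare {t : K} (ht : IsSquare t) (ht0 : t ≠ 0) (v : V) :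
    squareClass K (t • v) = squareClass K v := by
  obtain ⟨r, rfl⟩ := ht
  have hr : r ≠ 0 := fun h => ht0 (by simp [h])
  ext w
  constructor
  · rintro ⟨x, hx, rfl⟩
    exact ⟨x * r, mul_ne_zero hx hr, by rw [smul_smul]; ring_nf⟩
  · rintro ⟨x, hx, rfl⟩
    refine ⟨x * r⁻¹, mul_ne_zero hx (inv_ne_zero hr), ?_⟩
    rw [smul_smul]
    congr 1
    field_simp

lemma squareClass_eq_iff {u v : V} :
    squareClass K u = squareClass K v ↔ ∃ x : K, x ≠ 0 ∧ x ^ 2 • u = v := by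
  constructor
  · intro h
    have hv : v ∈ squareClass K v := ⟨1, one_ne_zero, by simp⟩
    rwa [← h] at hv
  · rintro ⟨x, hx, rfl⟩
    exact (squareClass_smul_of_isSquare (IsSquare.sq x) (pow_ne_zero 2 hx) u).symm

lemma image_squareClass (f : V →ₗ[K] W) (v : V) :
    f '' squareClass K v = squareClass K (f v) := by
  ext w
  constructor
  · rintro ⟨_, ⟨x, hx, rfl⟩, rfl⟩
    exact ⟨x, hx, (f.map_smul _ v).symm⟩
  · rintro ⟨x, hx, rfl⟩
    exact ⟨x ^ 2 • v, ⟨x, hx, rfl⟩, f.map_smul _ v⟩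

lemma squareClass_neg_ne (hK : ¬IsSquare (-1 : K)) {v : V} (hv : v ≠ 0) :
    squareClass K (-v) ≠ squareClass K v := by
  rw [Ne, squareClass_eq_iff]
  rintro ⟨x, -, hx⟩
  rw [smul_neg, neg_eq_iff_eq_neg] at hx
  have : (x ^ 2 + 1) • v = 0 := by rw [add_smul, hx, one_smul, neg_add_cancel]
  obtain h | h := smul_eq_zero.mp this
  · exact hK ⟨x, by linear_combination -h⟩
  · exact hv h

lemma squareClass_smul_eq_or (hK : ∀ a : K, IsSquare a ∨ IsSquare (-a)) {t : K} (ht : t ≠ 0)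
    (v : V) : squareClass K (t • v) = squareClass K v ∨ squareClass K (t • v) = squareClass K (-v) :=
  (hK t).imp (fun h => squareClass_smul_of_isSquare h ht v) fun h => by
    rw [← squareClass_smul_of_isSquare h (neg_ne_zero.mpr ht) (-v), neg_smul_neg]

end SquareClass

lemma FiniteField.isSquare_or_isSquare_neg {F : Type*} [Field F] [Fintype F]
    (hF : ¬IsSquare (-1 : F)) (a : F) : IsSquare a ∨ IsSquare (-a) := by
  classical
  by_contra! h
  have ha : a ≠ 0 := by
    rintro rfl
    exact h.1 IsSquare.zero
  have hχ : quadraticChar F (-a) = 1 := by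
    rw [neg_eq_neg_one_mul, map_mul, quadraticChar_neg_one_iff_not_isSquare.mpr hF,
      quadraticChar_neg_one_iff_not_isSquare.mpr h.1, neg_one_mul, neg_neg]
  exact h.2 ((quadraticChar_one_iff_isSquare (neg_ne_zero.mpr ha)).mp hχ)

section Plane

variable {K : Type*} [Field K]

lemma exists_eq_smul_of_det_eq_zero {u v : Fin 2 → K} (hu : u ≠ 0)
    (h : u 0 * v 1 - u 1 * v 0 = 0) : ∃ t : K, v = t • u := by
  obtain ⟨i, hi⟩ : ∃ i, u i ≠ 0 := by
    by_contra! h0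
    exact hu (funext h0)
  refine ⟨v i / u i, funext fun j => ?_⟩
  simp only [Pi.smul_apply, smul_eq_mul]
  field_simp
  fin_cases i <;> fin_cases j <;> simp only [Fin.zero_eta, Fin.mk_one, Fin.isValue]
  · linear_combination h
  · linear_combination -h

lemma image_vecMul_squareClass {m n : Type*} [Fintype m] (M : Matrix m n K) (v : m → K) :
    (fun w => w ᵥ* M) '' squareClass K v = squareClass K (v ᵥ* M) :=
  image_squareClass M.vecMulLinear v

lemma cons_one_zero_vecMul (M : Matrix (Fin 2) (Fin 2) K) : ![1, 0] ᵥ* M = M 0 := by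
  ext j
  simp [Matrix.vecMul, dotProduct]

lemma cons_zero_one_vecMul (M : Matrix (Fin 2) (Fin 2) K) : ![0, 1] ᵥ* M = M 1 := by
  ext j
  simp [Matrix.vecMul, dotProduct]

/-- The arc relation of the orbital digraph of `SL(2, K)` on square classes through
`(⟨e₁⟩, ⟨e₂⟩)`, i.e. of `X_q` when `K = 𝔽_q`. -/
def IsSLArc (S T : Set (Fin 2 → K)) : Prop :=
  ∃ g : SL(2, K), (fun v => v ᵥ* (g : Matrix (Fin 2) (Fin 2) K)) '' squareClass K ![1, 0] = S ∧
    (fun v => v ᵥ* (g : Matrix (Fin 2) (Fin 2) K)) '' squareClass K ![0, 1] = T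

lemma isSLArc_squareClass_iff {u v : Fin 2 → K} :
    IsSLArc (squareClass K u) (squareClass K v) ↔
      IsSquare (u 0 * v 1 - u 1 * v 0) ∧ u 0 * v 1 - u 1 * v 0 ≠ 0 := by
  constructor
  · rintro ⟨g, h0, h1⟩
    rw [image_vecMul_squareClass, cons_one_zero_vecMul, squareClass_eq_iff] at h0
    rw [image_vecMul_squareClass, cons_zero_one_vecMul, squareClass_eq_iff] at h1
    obtain ⟨a, ha, hu⟩ := h0
    obtain ⟨b, hb, hv⟩ := h1
    have hdet := g.det_coe
    rw [Matrix.det_fin_two] at hdet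
    have hd : u 0 * v 1 - u 1 * v 0 = (a * b) ^ 2 := by
      simp only [← hu, ← hv, Pi.smul_apply, smul_eq_mul]
      linear_combination (a * b) ^ 2 * hdet
    rw [hd]
    exact ⟨⟨a * b, sq _⟩, pow_ne_zero 2 (mul_ne_zero ha hb)⟩
  · rintro ⟨⟨e, he⟩, hd⟩
    have he0 : e ≠ 0 := by
      rintro rfl
      exact hd (by rw [he, zero_mul])
    refine ⟨⟨Matrix.of ![(e⁻¹) ^ 2 • u, v], ?_⟩, ?_, ?_⟩
    · rw [Matrix.det_fin_two]
      simp only [Matrix.of_apply, Matrix.cons_val_zero, Matrix.cons_val_one, Pi.smul_apply,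
        smul_eq_mul]
      field_simp
      linear_combination he
    · rw [image_vecMul_squareClass, cons_one_zero_vecMul]
      exact squareClass_smul_of_isSquare (IsSquare.sq _) (pow_ne_zero 2 (inv_ne_zero he0)) u
    · rw [image_vecMul_squareClass, cons_zero_one_vecMul]
      rfl

lemma adjacent_squareClass_iff (hK : ∀ a : K, IsSquare a ∨ IsSquare (-a)) {u v : Fin 2 → K} :
    IsSLArc (squareClass K u) (squareClass K v) ∨ IsSLArc (squareClass K v) (squareClass K u) ↔
      u 0 * v 1 - u 1 * v 0 ≠ 0 := by
  have hswap : v 0 * u 1 - v 1 * u 0 = -(u 0 * v 1 - u 1 * v 0) := by ring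
  rw [isSLArc_squareClass_iff, isSLArc_squareClass_iff, hswap, neg_ne_zero]
  constructor
  · rintro (⟨-, h⟩ | ⟨-, h⟩) <;> exact h
  · intro h
    exact (hK _).imp (⟨·, h⟩) (⟨·, h⟩)

end Plane

theorem Xq_unique_nonneighbour_general (F : Type*) [Field F] [Fintype F]
    (hq : Fintype.card F % 4 = 3) :
    let O : (Fin 2 → F) → Set (Fin 2 → F) := fun v => {w | ∃ x : F, x ≠ 0 ∧ x ^ 2 • v = w}
    let Δ : Set (Set (Fin 2 → F)) := {S | ∃ v : Fin 2 → F, v ≠ 0 ∧ S = O v}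
    let act : Matrix.SpecialLinearGroup (Fin 2) F → Set (Fin 2 → F) → Set (Fin 2 → F) :=
      fun g S => (fun v => Matrix.vecMul v (g : Matrix (Fin 2) (Fin 2) F)) '' S
    let Arc : Set (Fin 2 → F) → Set (Fin 2 → F) → Prop :=
      fun S T => ∃ h : Matrix.SpecialLinearGroup (Fin 2) F,
        act h (O ![1, 0]) = S ∧ act h (O ![0, 1]) = T
    let zimg : Set (Fin 2 → F) → Set (Fin 2 → F) := fun S => (fun v : Fin 2 → F => -v) '' S
    ∀ S ∈ Δ, zimg S ∈ Δ ∧ zimg S ≠ S ∧ ¬ (Arc S (zimg S) ∨ Arc (zimg S) S) ∧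
      ∀ T ∈ Δ, T ≠ S → ¬ (Arc S T ∨ Arc T S) → T = zimg S := by
  intro O Δ act Arc zimg
  have hneg : ¬IsSquare (-1 : F) := by
    rw [FiniteField.isSquare_neg_one_iff, not_not]
    exact hq
  have hsq := FiniteField.isSquare_or_isSquare_neg hneg
  have hz : ∀ u, zimg (O u) = O (-u) := fun u => image_squareClass (-LinearMap.id) u
  have hadj : ∀ u v, (Arc (O u) (O v) ∨ Arc (O v) (O u)) ↔ u 0 * v 1 - u 1 * v 0 ≠ 0 :=
    fun u v => adjacent_squareClass_iff hsq
  rintro S ⟨u, hu, rfl⟩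
  refine ⟨⟨-u, neg_ne_zero.mpr hu, hz u⟩, ?_, ?_, ?_⟩
  · rw [hz]
    exact squareClass_neg_ne hneg hu
  · rw [hz, hadj, not_not]
    simp only [Pi.neg_apply]
    ring
  · rintro T ⟨v, hv, rfl⟩ hne hnadj
    rw [hadj, not_not] at hnadj
    obtain ⟨t, rfl⟩ := exists_eq_smul_of_det_eq_zero hu hnadj
    have ht : t ≠ 0 := by
      rintro rfl
      simp at hv
    rw [hz]
    exact (squareClass_smul_eq_or hsq ht u).resolve_left hne

/-- For `q ≡ 3 (mod 4)`, `q ≥ 7`, in the orbital digraph `X_q` of `SL(2,q)` on `Δ`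
defined by the arc `([1,0],[0,1])`, every vertex `v` has exactly one non-adjacent
vertex, namely `v^z` where `z = -I`. -/
theorem Xq_unique_nonneighbour (F : Type*) [Field F] [Fintype F] [DecidableEq F]
    (hq : Fintype.card F % 4 = 3) (hq7 : 7 ≤ Fintype.card F) :
    let O : (Fin 2 → F) → Set (Fin 2 → F) := fun v => {w | ∃ x : F, x ≠ 0 ∧ x ^ 2 • v = w}
    let Δ : Set (Set (Fin 2 → F)) := {S | ∃ v : Fin 2 → F, v ≠ 0 ∧ S = O v}
    let act : Matrix.SpecialLinearGroup (Fin 2) F → Set (Fin 2 → F) → Set (Fin 2 → F) :=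
      fun g S => (fun v => Matrix.vecMul v (g : Matrix (Fin 2) (Fin 2) F)) '' S
    let Arc : Set (Fin 2 → F) → Set (Fin 2 → F) → Prop :=
      fun S T => ∃ h : Matrix.SpecialLinearGroup (Fin 2) F,
        act h (O ![1, 0]) = S ∧ act h (O ![0, 1]) = T
    let zimg : Set (Fin 2 → F) → Set (Fin 2 → F) := fun S => (fun v : Fin 2 → F => -v) '' S
    ∀ S ∈ Δ, zimg S ∈ Δ ∧ zimg S ≠ S ∧ ¬ (Arc S (zimg S) ∨ Arc (zimg S) S) ∧
      ∀ T ∈ Δ, T ≠ S → ¬ (Arc S T ∨ Arc T S) → T = zimg S :=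
  Xq_unique_nonneighbour_general F hq
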